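/- arXiv:2012.11427 — 2 statements merged into one kernel-verified Lean document; each statement's English description precedes it below -/
import Mathlib

section
/- Let R = 𝔽₂[T⁴,T⁵,T⁶] ⊆ 𝔽₂[T]. Then R is isomorphic to 𝔽₂[X,Y,Z]/(XZ−Y², X³−Z²), and the map D = Y∂/∂Y induces a well-defined derivation on R, i.e., D(XZ−Y²) and D(X³−Z²) lie in the ideal (XZ−Y², X³−Z²) of 𝔽₂[X,Y,Z]. -/
/-!
Under `X ↦ T⁴, Y ↦ T⁵, Z ↦ T⁶` the monomial `XᵃYᵇZᶜ` goes to `T^(4a+5b+6c)`, and modulo the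
relations `Y² = XZ`, `Z² = X³` every monomial reduces to one with `b, c < 2`, which is determined
by its weight `4a+5b+6c`. Sending `Tᵐ` to this normal form of weight `m` gives a left inverse of
`R[X,Y,Z]/(XZ − Y², X³ − Z²) → R[T]`, so the kernel is exactly the ideal of relations.
For the derivation, `D(X³ − Z²) = 0` and `D(XZ − Y²) = −2Y² = 0` in characteristic `2`.
-/

open MvPolynomial

theorem Derivation.map_mem_of_mem_span {R A : Type*} [CommSemiring R] [CommSemiring A]
    [Algebra R A] (D : Derivation R A A) {I : Ideal A} {s : Set A} (hs : s ⊆ I)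
    (hD : ∀ x ∈ s, D x ∈ I) : ∀ f ∈ Ideal.span s, D f ∈ I := by
  intro f hf
  induction hf using Submodule.span_induction with
  | mem x hx => exact hD x hx
  | zero => rw [map_zero]; exact I.zero_mem
  | add x y _ _ hx hy => rw [map_add]; exact I.add_mem hx hy
  | smul a x hx hDx =>
    rw [smul_eq_mul, Derivation.leibniz, smul_eq_mul, smul_eq_mul]
    exact I.add_mem (I.mul_mem_left a hDx) (I.mul_mem_right _ (Ideal.span_le.2 hs hx))

namespace MonomialCurve456

variable (R : Type*) [CommRing R]

noncomputable def param : MvPolynomial (Fin 3) R →ₐ[R] Polynomial R :=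
  aeval ![Polynomial.X ^ 4, Polynomial.X ^ 5, Polynomial.X ^ 6]

noncomputable def relations : Ideal (MvPolynomial (Fin 3) R) :=
  Ideal.span {X 0 * X 2 - X 1 ^ 2, X 0 ^ 3 - X 2 ^ 2}

/-- The monomial `XᵃYᵇZᶜ` with `b, c < 2` and `4a + 5b + 6c = m`; for the gaps `m ∈ {1, 2, 3, 7}`
of the semigroup `⟨4, 5, 6⟩` the truncated subtraction makes it meaningless. -/
noncomputable def normalMonomial (m : ℕ) : MvPolynomial (Fin 3) R :=
  X 0 ^ ((m - 5 * (m % 2) - 6 * (m % 4 / 2)) / 4) * X 1 ^ (m % 2) * X 2 ^ (m % 4 / 2)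

variable {R}

lemma normalMonomial_of_lt_two {a b c : ℕ} (hb : b < 2) (hc : c < 2) :
    normalMonomial R (4 * a + 5 * b + 6 * c) = X 0 ^ a * X 1 ^ b * X 2 ^ c := by
  have hb' : (4 * a + 5 * b + 6 * c) % 2 = b := by omega
  have hc' : (4 * a + 5 * b + 6 * c) % 4 / 2 = c := by
    interval_cases b <;> interval_cases c <;> omega
  have ha : (4 * a + 5 * b + 6 * c - 5 * b - 6 * c) / 4 = a := by omega
  rw [normalMonomial, hb', hc', ha]

lemma param_monomial (u : Fin 3 →₀ ℕ) (r : R) :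
    param R (monomial u r) = Polynomial.monomial (4 * u 0 + 5 * u 1 + 6 * u 2) r := by
  rw [param, aeval_monomial, Finsupp.prod_fintype _ _ (fun i => pow_zero _), Fin.prod_univ_three]
  simp only [Matrix.cons_val_zero, Matrix.cons_val_one, Matrix.cons_val_two, Matrix.head_cons,
    Matrix.tail_cons, ← pow_mul, ← pow_add, Polynomial.algebraMap_eq,
    Polynomial.C_mul_X_pow_eq_monomial]

lemma relations_le_ker_param : relations R ≤ RingHom.ker (param R) := by
  rw [relations, Ideal.span_le, Set.insert_subset_iff, Set.singleton_subset_iff]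
  constructor <;> simp [param] <;> ring

local notation "mk" => Ideal.Quotient.mk (relations R)

lemma mk_X1_sq_reduce (a b c : ℕ) :
    mk (X 0 ^ a * X 1 ^ (b + 2) * X 2 ^ c) = mk (X 0 ^ (a + 1) * X 1 ^ b * X 2 ^ (c + 1)) := by
  rw [Ideal.Quotient.eq]
  have h : X 0 ^ a * X 1 ^ (b + 2) * X 2 ^ c - X 0 ^ (a + 1) * X 1 ^ b * X 2 ^ (c + 1)
      = -(X 0 ^ a * X 1 ^ b * X 2 ^ c) * (X 0 * X 2 - X 1 ^ 2 : MvPolynomial (Fin 3) R) := by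
    ring
  exact h ▸ Ideal.mul_mem_left _ _ (Ideal.subset_span (by simp))

lemma mk_X2_sq_reduce (a b c : ℕ) :
    mk (X 0 ^ a * X 1 ^ b * X 2 ^ (c + 2)) = mk (X 0 ^ (a + 3) * X 1 ^ b * X 2 ^ c) := by
  rw [Ideal.Quotient.eq]
  have h : X 0 ^ a * X 1 ^ b * X 2 ^ (c + 2) - X 0 ^ (a + 3) * X 1 ^ b * X 2 ^ c
      = -(X 0 ^ a * X 1 ^ b * X 2 ^ c) * (X 0 ^ 3 - X 2 ^ 2 : MvPolynomial (Fin 3) R) := by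
    ring
  exact h ▸ Ideal.mul_mem_left _ _ (Ideal.subset_span (by simp))

lemma mk_monomial_eq_normalMonomial (a b c : ℕ) :
    mk (X 0 ^ a * X 1 ^ b * X 2 ^ c) = mk (normalMonomial R (4 * a + 5 * b + 6 * c)) := by
  induction h : b + c using Nat.strong_induction_on generalizing a b c with
  | _ n ih =>
    obtain ⟨b, rfl⟩ | hb := le_or_gt 2 b |>.imp Nat.exists_eq_add_of_le' id
    · rw [mk_X1_sq_reduce, ih _ (by omega) (a + 1) b (c + 1) rfl]
      ring_nf
    obtain ⟨c, rfl⟩ | hc := le_or_gt 2 c |>.imp Nat.exists_eq_add_of_le' id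
    · rw [mk_X2_sq_reduce, ih _ (by omega) (a + 3) b c rfl]
      ring_nf
    rw [normalMonomial_of_lt_two hb hc]

variable (R) in
noncomputable def normalForm : Polynomial R →ₗ[R] MvPolynomial (Fin 3) R ⧸ relations R :=
  Polynomial.lsum fun m => LinearMap.toSpanSingleton R _ (mk (normalMonomial R m))

lemma normalForm_param (f : MvPolynomial (Fin 3) R) : normalForm R (param R f) = mk f := by
  induction f using MvPolynomial.induction_on' with
  | add p q hp hq => rw [map_add, map_add, hp, hq, map_add]
  | monomial u r =>
    rw [param_monomial, normalForm, Polynomial.lsum_apply,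
      Polynomial.sum_monomial_index _ _ (by simp), monomial_eq,
      Finsupp.prod_fintype _ _ (fun i => pow_zero _), Fin.prod_univ_three, map_mul,
      mk_monomial_eq_normalMonomial, ← Ideal.Quotient.mkₐ_eq_mk R, ← algebraMap_eq,
      AlgHom.commutes, ← Algebra.smul_def, LinearMap.toSpanSingleton_apply]

theorem ker_param : RingHom.ker (param R) = relations R := by
  refine le_antisymm (fun f hf => ?_) relations_le_ker_param
  rw [← Ideal.Quotient.eq_zero_iff_mem, ← normalForm_param, RingHom.mem_ker.1 hf, map_zero]

theorem range_param :
    (param R).range = Algebra.adjoin R {Polynomial.X ^ 4, Polynomial.X ^ 5, Polynomial.X ^ 6} := by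
  rw [param, ← Algebra.adjoin_range_eq_range_aeval]
  simp only [Matrix.range_cons, Matrix.range_empty, Set.union_empty, Set.singleton_union]

variable (R) in
noncomputable def quotientRelationsEquiv : (MvPolynomial (Fin 3) R ⧸ relations R) ≃ₐ[R]
    Algebra.adjoin R {(Polynomial.X ^ 4 : Polynomial R), Polynomial.X ^ 5, Polynomial.X ^ 6} :=
  (Ideal.quotientEquivAlgOfEq R ker_param.symm).trans <|
    (Ideal.quotientKerEquivRange (param R)).trans (Subalgebra.equivOfEq _ _ range_param)

variable (R) in
noncomputable def derivY : Derivation R (MvPolynomial (Fin 3) R) (MvPolynomial (Fin 3) R) :=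
  mkDerivation R ![0, X 1, 0]

lemma derivY_X0_mul_X2_sub_X1_sq [CharP R 2] :
    derivY R (X 0 * X 2 - X 1 ^ 2) = 0 := by
  simp [derivY, Derivation.leibniz, mkDerivation_X, two_smul, CharTwo.add_self_eq_zero]

lemma derivY_X0_pow_sub_X2_sq : derivY R (X 0 ^ 3 - X 2 ^ 2) = 0 := by
  simp [derivY, Derivation.leibniz_pow, mkDerivation_X]

theorem derivY_mem_relations [CharP R 2] : ∀ f ∈ relations R, derivY R f ∈ relations R := by
  refine (derivY R).map_mem_of_mem_span Ideal.subset_span ?_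
  simp [derivY_X0_mul_X2_sub_X1_sq, derivY_X0_pow_sub_X2_sq]

end MonomialCurve456

/-- The ring `R = 𝔽₂[T⁴,T⁵,T⁶] ⊆ 𝔽₂[T]` is isomorphic to
`𝔽₂[X,Y,Z]/(XZ−Y², X³−Z²)`, and the derivation `D = Y∂/∂Y` of `𝔽₂[X,Y,Z]`
(sending `X ↦ 0, Y ↦ Y, Z ↦ 0`) maps both relations `XZ−Y²` and `X³−Z²` into the
ideal `(XZ−Y², X³−Z²)`, hence induces a well-defined derivation on `R`. -/
theorem stmt4 :
    let S : Type := MvPolynomial (Fin 3) (ZMod 2)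
    let I : Ideal S :=
      Ideal.span {(X 0 : S) * X 2 - X 1 ^ 2, (X 0 : S) ^ 3 - X 2 ^ 2}
    let A : Subalgebra (ZMod 2) (Polynomial (ZMod 2)) :=
      Algebra.adjoin (ZMod 2)
        {Polynomial.X ^ 4, Polynomial.X ^ 5, Polynomial.X ^ 6}
    let D : Derivation (ZMod 2) S S :=
      MvPolynomial.mkDerivation (ZMod 2) ![(0 : S), X 1, 0]
    Nonempty ((S ⧸ I) ≃ₐ[ZMod 2] A) ∧
    D ((X 0 : S) * X 2 - X 1 ^ 2) ∈ I ∧ D ((X 0 : S) ^ 3 - X 2 ^ 2) ∈ I ∧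
    (∀ f ∈ I, D f ∈ I) := by
  have hD := MonomialCurve456.derivY_mem_relations (R := ZMod 2)
  exact ⟨⟨MonomialCurve456.quotientRelationsEquiv (ZMod 2)⟩,
    hD _ (Ideal.subset_span (by simp)), hD _ (Ideal.subset_span (by simp)), hD⟩
end

section
/- Let k = 𝔽₂ and R = 𝔽₂[X,Y]/(X⁴, X²Y², Y⁴). Then the module of Kähler differentials Ω_{R/k} is a free R-module of rank 2; consequently Der_k(R) = Hom_R(Ω_{R/k}, R) ≅ R². -/
set_option synthInstance.maxHeartbeats 1000000
set_option maxHeartbeats 1000000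

open MvPolynomial

/-- The ring `R = 𝔽₂[X,Y]/(X⁴, X²Y², Y⁴)`. -/
noncomputable abbrev R7 : Type :=
  MvPolynomial (Fin 2) (ZMod 2) ⧸
    (Ideal.span {(X 0 : MvPolynomial (Fin 2) (ZMod 2)) ^ 4, (X 0 : MvPolynomial (Fin 2) (ZMod 2)) ^ 2 * X 1 ^ 2, (X 1 : MvPolynomial (Fin 2) (ZMod 2)) ^ 4})

noncomputable abbrev P7 : Type := MvPolynomial (Fin 2) (ZMod 2)
noncomputable abbrev I7 : Ideal P7 :=
  Ideal.span {(X 0 : P7) ^ 4, (X 0 : P7) ^ 2 * X 1 ^ 2, (X 1 : P7) ^ 4}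

noncomputable def δ7 : Derivation (ZMod 2) P7 (Fin 2 → R7) :=
  MvPolynomial.mkDerivation (ZMod 2) (fun i => (Pi.single i 1 : Fin 2 → R7))

lemma smul_eq_mk_smul (p : P7) (m : Fin 2 → R7) :
    p • m = Ideal.Quotient.mk I7 p • m := by
  funext i
  show p • m i = Ideal.Quotient.mk I7 p • m i
  rw [Algebra.smul_def p (m i), Ideal.Quotient.algebraMap_eq, smul_eq_mul]

lemma mem_smul_zero {p : P7} (hp : p ∈ I7) (m : Fin 2 → R7) : p • m = 0 := by
  rw [smul_eq_mk_smul, Ideal.Quotient.eq_zero_iff_mem.2 hp]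
  exact zero_smul R7 m

lemma two_nsmul_zero (m : Fin 2 → R7) : (2 : ℕ) • m = 0 := by
  rw [← Nat.cast_smul_eq_nsmul (ZMod 2), show ((2:ℕ):ZMod 2) = 0 by decide, zero_smul]

lemma δ7_sq (i : Fin 2) : δ7 ((X i : P7) ^ 2) = 0 := by
  rw [Derivation.leibniz_pow, smul_comm, two_nsmul_zero, smul_zero]

lemma δ7_vanish {p : P7} (hp : p ∈ I7) : δ7 p = 0 := by
  induction hp using Submodule.span_induction with
  | mem x hx =>
    rcases hx with rfl | rfl | rfl
    · have h2 : δ7 ((X 0 : P7) ^ 4) = δ7 (((X 0 : P7) ^ 2) ^ 2) :=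
        congrArg _ (by ring)
      rw [h2, Derivation.leibniz_pow, smul_comm, two_nsmul_zero, smul_zero]
    · rw [Derivation.leibniz, δ7_sq, δ7_sq, smul_zero, smul_zero, add_zero]
    · have h2 : δ7 ((X 1 : P7) ^ 4) = δ7 (((X 1 : P7) ^ 2) ^ 2) :=
        congrArg _ (by ring)
      rw [h2, Derivation.leibniz_pow, smul_comm, two_nsmul_zero, smul_zero]
  | zero => exact δ7.map_zero
  | add x y hx hy ihx ihy => rw [map_add, ihx, ihy, add_zero]
  | smul a x hx ih =>
    rw [smul_eq_mul, Derivation.leibniz, ih, smul_zero, zero_add,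
      mem_smul_zero hx]

noncomputable def Dlin7 : R7 →ₗ[ZMod 2] (Fin 2 → R7) :=
  (Submodule.liftQ (I7.restrictScalars (ZMod 2)) δ7.toLinearMap
    (fun p hp => δ7_vanish hp)).comp
    (Submodule.Quotient.restrictScalarsEquiv (ZMod 2) I7).symm.toLinearMap

lemma Dlin7_mk (p : P7) : Dlin7 (Ideal.Quotient.mk I7 p) = δ7 p := by
  have h : (Ideal.Quotient.mk I7 p : R7) = Submodule.Quotient.mk p := rfl
  simp only [Dlin7, LinearMap.coe_comp, Function.comp_apply, LinearEquiv.coe_coe, h,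
    Submodule.Quotient.restrictScalarsEquiv_symm_mk, Submodule.liftQ_apply]
  rfl

noncomputable def D7 : Derivation (ZMod 2) R7 (Fin 2 → R7) where
  toLinearMap := Dlin7
  map_one_eq_zero' := by
    show Dlin7 1 = 0
    rw [show (1:R7) = Ideal.Quotient.mk I7 1 from rfl, Dlin7_mk]; exact δ7.map_one_eq_zero
  leibniz' := fun a b => by
    obtain ⟨p, rfl⟩ := Ideal.Quotient.mk_surjective a
    obtain ⟨q, rfl⟩ := Ideal.Quotient.mk_surjective b
    show Dlin7 _ = _ • Dlin7 _ + _ • Dlin7 _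
    rw [← map_mul, Dlin7_mk, Dlin7_mk, Dlin7_mk, Derivation.leibniz,
      smul_eq_mk_smul, smul_eq_mk_smul]

lemma D7_mk (p : P7) : D7 (Ideal.Quotient.mk I7 p) = δ7 p := Dlin7_mk p

lemma D7_X (i : Fin 2) : D7 (Ideal.Quotient.mk I7 (X i)) = Pi.single i 1 := by
  rw [D7_mk]; exact MvPolynomial.mkDerivation_X _ _ i

lemma I7_ne_top : I7 ≠ ⊤ := by
  intro h
  have h1 : (1 : P7) ∈ I7 := h ▸ Submodule.mem_top
  have : I7 ≤ RingHom.ker (constantCoeff (R := ZMod 2) (σ := Fin 2)) := by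
    rw [Ideal.span_le]
    rintro x (rfl | rfl | rfl) <;> simp [RingHom.mem_ker]
  have := this h1
  simp [RingHom.mem_ker] at this

instance : Nontrivial R7 := Ideal.Quotient.nontrivial_iff.mpr I7_ne_top

noncomputable def ψ7 : (Ω[R7⁄ZMod 2]) →ₗ[R7] (Fin 2 → R7) :=
  D7.liftKaehlerDifferential

noncomputable def φ7 : (Fin 2 → R7) →ₗ[R7] (Ω[R7⁄ZMod 2]) :=
  (Pi.basisFun R7 (Fin 2)).constr R7
    (fun i => KaehlerDifferential.D (ZMod 2) R7 (Ideal.Quotient.mk I7 (X i)))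

lemma ψ7_comp_φ7 : ψ7.comp φ7 = LinearMap.id := by
  apply (Pi.basisFun R7 (Fin 2)).ext
  intro i
  rw [LinearMap.comp_apply, φ7, Module.Basis.constr_basis, ψ7,
    Derivation.liftKaehlerDifferential_comp_D, D7_X, LinearMap.id_apply,
    Pi.basisFun_apply]

lemma adjoin_top : Algebra.adjoin (ZMod 2)
    (Set.range fun i => Ideal.Quotient.mk I7 (X i)) = ⊤ := by
  have : (Set.range fun i => Ideal.Quotient.mk I7 (X i)) =
      (Ideal.Quotient.mkₐ (ZMod 2) I7) '' (Set.range X) := by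
    rw [← Set.range_comp]; rfl
  rw [this, ← AlgHom.map_adjoin, MvPolynomial.adjoin_range_X, Algebra.map_top,
    AlgHom.range_eq_top]
  exact Ideal.Quotient.mkₐ_surjective _ _

lemma φ7_comp_ψ7 : φ7.comp ψ7 = LinearMap.id := by
  have key : φ7.compDer D7 = KaehlerDifferential.D (ZMod 2) R7 := by
    apply Derivation.ext_of_adjoin_eq_top _ adjoin_top
    rintro x ⟨i, rfl⟩
    show φ7 (D7 _) = _
    rw [D7_X, ← Pi.basisFun_apply, φ7, Module.Basis.constr_basis]
  apply LinearMap.ext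
  intro w
  have hspan := KaehlerDifferential.span_range_derivation (ZMod 2) R7
  have hw : w ∈ Submodule.span R7
      (Set.range (KaehlerDifferential.D (ZMod 2) R7)) := hspan ▸ Submodule.mem_top
  induction hw using Submodule.span_induction with
  | mem x hx =>
    obtain ⟨r, rfl⟩ := hx
    rw [LinearMap.comp_apply, ψ7, Derivation.liftKaehlerDifferential_comp_D,
      LinearMap.id_apply]
    exact Derivation.congr_fun key r
  | zero => simp
  | add x y _ _ ihx ihy =>
    simp only [LinearMap.comp_apply, LinearMap.id_apply] at ihx ihy ⊢
    rw [map_add, map_add, ihx, ihy]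
  | smul a x _ ih =>
    simp only [LinearMap.comp_apply, LinearMap.id_apply] at ih ⊢
    rw [map_smul, map_smul, ih]

noncomputable def e7 : (Ω[R7⁄ZMod 2]) ≃ₗ[R7] (Fin 2 → R7) :=
  LinearEquiv.ofLinear ψ7 φ7 ψ7_comp_φ7 φ7_comp_ψ7

noncomputable def dualEquiv7 : (Module.Dual R7 (Ω[R7⁄ZMod 2])) ≃ₗ[R7] (Fin 2 → R7) :=
  (e7.symm.dualMap.trans ((Pi.basisFun R7 (Fin 2)).dualBasis.equivFun))

noncomputable def derEquiv7 : (Derivation (ZMod 2) R7 R7) ≃ₗ[R7] (Fin 2 → R7) :=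
  ((KaehlerDifferential.linearMapEquivDerivation (ZMod 2) R7 (M := R7)).symm.trans dualEquiv7)


/-- For `k = 𝔽₂` and `R = 𝔽₂[X,Y]/(X⁴, X²Y², Y⁴)`, the module of Kähler
differentials `Ω_{R/k}` is a free `R`-module of rank 2; consequently
`Der_k(R) = Hom_R(Ω_{R/k}, R) ≅ R²`. -/
theorem stmt7 :
    Module.Free R7 (Ω[R7⁄ZMod 2]) ∧ Module.finrank R7 (Ω[R7⁄ZMod 2]) = 2 ∧
    Nonempty ((Module.Dual R7 (Ω[R7⁄ZMod 2])) ≃ₗ[R7] (Fin 2 → R7)) ∧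
    Nonempty ((Derivation (ZMod 2) R7 R7) ≃ₗ[R7] (Fin 2 → R7)) := by
  refine ⟨Module.Free.of_equiv e7.symm, ?_, ⟨dualEquiv7⟩, ⟨derEquiv7⟩⟩
  rw [e7.finrank_eq, Module.finrank_fin_fun]
end
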